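/- arXiv:1310.7095 — 4 statements merged into one kernel-verified Lean document; each statement's English description precedes it below -/
import Mathlib

section
/- Assume the leading coefficients c_{j, m_j − 1} are nonzero for every j = 1, …, n. Then for every k_0 ∈ ℕ and every N ≥ M, the N × N square Hankel matrix H_{N,N}^{k_0} with entries h(k_0 + i + l) (0 ≤ i, l ≤ N − 1) has rank exactly M. -/
open Finset

/-- The monomial-exponential sum `h(k) = ∑ j ∑ s, c j s * k ^ s * z j ^ k`. -/
noncomputable def hmes {n : ℕ} (z : Fin n → ℂ) (m : Fin n → ℕ)
    (c : (j : Fin n) → Fin (m j) → ℂ) (k : ℕ) : ℂ :=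
  ∑ j, ∑ s : Fin (m j), c j s * (k : ℂ) ^ (s : ℕ) * z j ^ k

/-- The `N × M'` Hankel matrix with entries `h (k0 + i + l)`. -/
def hankel (h : ℕ → ℂ) (k0 N M' : ℕ) : Matrix (Fin N) (Fin M') ℂ :=
  Matrix.of fun i l => h (k0 + (i : ℕ) + (l : ℕ))

/-!
Write `h k = ∑ j, P j (k) * z j ^ k`, where `P j` has coefficients `c j ·` and degree exactly
`m j - 1`. Taylor-expanding `P j (i + (k0 + l))` in `i` factors the Hankel matrix as `V * Wᵀ`,
where `V` (of size `N × M`) has columns `i ↦ i ^ t * z j ^ i` and `W` has columns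
`l ↦ (hasseDeriv t (P j)) (k0 + l) * z j ^ (k0 + l)`, for `t < m j`. Both factors have independent
columns: a vanishing combination of them is a sequence `∑ j, Q j (k) * z j ^ k` with
`deg Q j < m j` vanishing at `M` consecutive integers, and such a sequence has all `Q j = 0`.
For `W` this leaves a vanishing combination of the Hasse derivatives of `P j`, which are
independent because their degrees `m j - 1 - t` are distinct. Hence the rank is `M`.
-/

open Polynomial
open scoped Matrix

namespace Polynomial

section CommRing

variable {R : Type*} [CommRing R]

theorem coeff_degreeLTEquiv_symm {m : ℕ} (c : Fin m → R) (i : Fin m) :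
    ((degreeLTEquiv R m).symm c : R[X]).coeff i = c i :=
  congrFun ((degreeLTEquiv R m).apply_symm_apply c) i

theorem degreeLTEquiv_symm_ne_zero {m : ℕ} {c : Fin m → R} {i : Fin m} (hc : c i ≠ 0) :
    ((degreeLTEquiv R m).symm c : R[X]) ≠ 0 := fun h =>
  hc (by rw [← coeff_degreeLTEquiv_symm c, h, coeff_zero])

theorem natDegree_degreeLTEquiv_symm [Nontrivial R] {m : ℕ} {c : Fin m → R} {i : Fin m}
    (hi : (i : ℕ) + 1 = m) (hc : c i ≠ 0) :
    ((degreeLTEquiv R m).symm c : R[X]).natDegree = i := by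
  have hmem := mem_degreeLT.1 ((degreeLTEquiv R m).symm c).property
  rw [degree_lt_iff_coeff_zero] at hmem
  refine natDegree_eq_of_le_of_coeff_ne_zero
    (natDegree_le_iff_coeff_eq_zero.2 fun k hk => hmem k (by omega)) ?_
  rwa [coeff_degreeLTEquiv_symm]

theorem hasseDeriv_mem_degreeLT {p : R[X]} {m : ℕ} (hp : p ∈ degreeLT R m) (k : ℕ) :
    hasseDeriv k p ∈ degreeLT R m := by
  rw [mem_degreeLT, degree_lt_iff_coeff_zero] at hp ⊢
  intro n hn
  rw [hasseDeriv_coeff, hp (n + k) (by omega), mul_zero]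

theorem eval_add_eq_sum_hasseDeriv {p : R[X]} {m : ℕ} (hp : p ∈ degreeLT R m) (x y : R) :
    p.eval (x + y) = ∑ t : Fin m, (hasseDeriv t p).eval y * x ^ (t : ℕ) := by
  rw [← taylor_eval, eval_eq_sum_degreeLTEquiv (taylor_mem_degreeLT.2 hp)]
  simp [degreeLTEquiv, taylor_coeff]

theorem taylor_sub_self_mem_degreeLT {p : R[X]} {m : ℕ} (hp : p ∈ degreeLT R (m + 1)) (r : R) :
    taylor r p - p ∈ degreeLT R m := by
  rcases eq_or_ne p 0 with rfl | hp0
  · simp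
  rw [degreeLT_succ_eq_degreeLE, mem_degreeLE] at hp
  rw [mem_degreeLT]
  calc (taylor r p - p).degree < (taylor r p).degree :=
        degree_sub_lt_left (degree_taylor p r) ((taylor_eq_zero r p).not.2 hp0)
          (leadingCoeff_taylor r p)
    _ = p.degree := degree_taylor p r
    _ ≤ m := hp

variable [IsDomain R]

theorem eq_zero_of_smul_taylor_eq_smul {a b : R} (hab : a ≠ b) (r : R) {p : R[X]}
    (h : a • taylor r p = b • p) : p = 0 := by
  have hlead := congrArg (coeff · p.natDegree) h
  simp only [coeff_smul, coeff_taylor_natDegree, smul_eq_mul] at hlead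
  rw [← leadingCoeff_eq_zero]
  exact (mul_eq_mul_right_iff.1 hlead).resolve_left hab

theorem eq_C_of_taylor_one_eq [CharZero R] {p : R[X]} (h : taylor 1 p = p) :
    p = C (p.eval 0) := by
  have heval : ∀ k : ℕ, p.eval (k : R) = p.eval 0 := by
    intro k
    induction k with
    | zero => simp
    | succ k ih => rw [Nat.cast_succ, ← taylor_eval, h, ih]
  refine eq_of_infinite_eval_eq _ _ (Set.infinite_range_of_injective Nat.cast_injective |>.mono ?_)
  rintro _ ⟨k, rfl⟩
  simp [heval k]

end CommRing

variable {K : Type*} [Field K]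

theorem linearIndependent_of_injective_degree {ι : Type*} [Fintype ι] {p : ι → K[X]}
    (hp : ∀ i, p i ≠ 0) (hdeg : Function.Injective fun i => (p i).degree) :
    LinearIndependent K p := by
  rw [Fintype.linearIndependent_iff]
  intro g hg i
  have hsup := degree_sum_eq_of_disjoint (fun i => g i • p i) univ <| by
    rintro a ⟨-, ha⟩ b ⟨-, hb⟩ hab
    simp only [Function.onFun, Function.comp_apply, smul_eq_C_mul,
      degree_C_mul (left_ne_zero_of_smul ha), degree_C_mul (left_ne_zero_of_smul hb)]
    exact hdeg.ne hab
  rw [hg, degree_zero, eq_comm, Finset.sup_eq_bot_iff] at hsup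
  simpa [hp i] using hsup i (mem_univ i)

theorem linearIndependent_hasseDeriv [CharZero K] {p : K[X]} (hp : p ≠ 0) :
    LinearIndependent K fun t : Fin (p.natDegree + 1) => hasseDeriv t p := by
  have hne : ∀ t : Fin (p.natDegree + 1), hasseDeriv t p ≠ 0 := by
    intro t h
    have ht : (t : ℕ) ≤ p.natDegree := Nat.lt_succ_iff.1 t.2
    have hcoeff := congrArg (coeff · (p.natDegree - t)) h
    simp only [hasseDeriv_coeff, Nat.sub_add_cancel ht, coeff_zero, mul_eq_zero,
      Nat.cast_eq_zero] at hcoeff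
    exact hcoeff.elim (Nat.choose_pos ht).ne' (leadingCoeff_ne_zero.2 hp)
  refine linearIndependent_of_injective_degree hne fun s t hst => ?_
  simp only [degree_eq_natDegree (hne _), natDegree_hasseDeriv, Nat.cast_inj] at hst
  omega

end Polynomial

section ExpPolySum

variable {ι R : Type*} [Fintype ι] [CommRing R]

noncomputable def expPolySum (P : ι → R[X]) (z : ι → R) (k : ℕ) : R :=
  ∑ j, (P j).eval (k : R) * z j ^ k

theorem expPolySum_succ_sub_mul (P : ι → R[X]) (z : ι → R) (a : R) (k : ℕ) :
    expPolySum P z (k + 1) - a * expPolySum P z k =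
      expPolySum (fun j => z j • taylor 1 (P j) - a • P j) z k := by
  simp only [expPolySum, mul_sum, ← sum_sub_distrib, eval_sub, eval_smul, taylor_eval,
    smul_eq_mul, Nat.cast_succ, pow_succ]
  exact sum_congr rfl fun j _ => by ring

/-- Induction on `∑ j, m j`: the difference operator `f ↦ f(· + 1) - z j0 • f` lowers the
degree of `P j0` by one and keeps the degree of every other `P j`. -/
theorem eq_zero_of_expPolySum_eq_zero [IsDomain R] [CharZero R] [DecidableEq ι] {z : ι → R}
    (hz : Function.Injective z) (hz0 : ∀ j, z j ≠ 0) {m : ι → ℕ} {P : ι → R[X]}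
    (hP : ∀ j, P j ∈ degreeLT R (m j)) (k0 : ℕ)
    (hvan : ∀ k < ∑ j, m j, expPolySum P z (k0 + k) = 0) : P = 0 := by
  induction hM : ∑ j, m j generalizing m P with
  | zero =>
    funext j
    have hmj : m j = 0 := sum_eq_zero_iff.1 hM j (mem_univ j)
    simpa [hmj, mem_degreeLT] using hP j
  | succ M ih =>
    obtain ⟨j0, hj0⟩ : ∃ j0, m j0 ≠ 0 := by
      by_contra! h
      simp [h] at hM
    set m' := Function.update m j0 (m j0 - 1)
    set Q : ι → R[X] := fun j => z j • taylor 1 (P j) - z j0 • P j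
    have hQ : ∀ j, Q j ∈ degreeLT R (m' j) := by
      intro j
      rcases eq_or_ne j j0 with rfl | hj
      · have hPj : P j ∈ degreeLT R (m j - 1 + 1) := by
          rw [Nat.sub_add_cancel (by omega)]; exact hP j
        simpa [m', Q, ← smul_sub] using
          Submodule.smul_mem _ (z j) (taylor_sub_self_mem_degreeLT hPj 1)
      · simpa [m', Q, hj] using Submodule.sub_mem _
          (Submodule.smul_mem _ (z j) (taylor_mem_degreeLT.2 (hP j)))
          (Submodule.smul_mem _ (z j0) (hP j))
    have hM' : ∑ j, m' j = M := by
      rw [sum_update_of_mem (mem_univ j0)]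
      rw [sum_eq_add_sum_sdiff_singleton_of_mem (mem_univ j0)] at hM
      omega
    have hQ0 : Q = 0 := by
      refine ih hQ (fun k hk => ?_) hM'
      rw [← expPolySum_succ_sub_mul, hvan k (by omega), mul_zero, sub_zero]
      exact hvan (k + 1) (by omega)
    have hPj : ∀ j ≠ j0, P j = 0 := fun j hj =>
      eq_zero_of_smul_taylor_eq_smul (hz.ne hj) 1 (sub_eq_zero.1 (congrFun hQ0 j))
    have hPj0 : P j0 = C ((P j0).eval 0) :=
      eq_C_of_taylor_one_eq (smul_right_injective _ (hz0 j0) (sub_eq_zero.1 (congrFun hQ0 j0)))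
    have hval : (P j0).eval (k0 : R) = 0 := by
      have := hvan 0 (by omega)
      rw [add_zero, expPolySum,
        sum_eq_single j0 (fun j _ hj => by simp [hPj j hj]) (by simp)] at this
      exact (mul_eq_zero.1 this).resolve_right (pow_ne_zero _ (hz0 j0))
    funext j
    rcases eq_or_ne j j0 with rfl | hj
    · rw [hPj0, eval_C] at hval
      rw [Pi.zero_apply, hPj0, hval, map_zero]
    · exact hPj j hj

end ExpPolySum

theorem Matrix.rank_mul_eq_card_of_linearIndependent {K l m n : Type*} [Field K] [Fintype m]
    [Fintype n] {A : Matrix l m K} {B : Matrix m n K} (hA : LinearIndependent K A.col)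
    (hB : LinearIndependent K B.row) : (A * B).rank = Fintype.card m := by
  rw [← hB.rank_matrix, Matrix.rank, Matrix.rank, Matrix.mulVecLin_mul, LinearMap.range_comp,
    ← (Submodule.equivMapOfInjective _ (Matrix.mulVec_injective_iff.2 hA) _).finrank_eq]

/-- For `Q ⟨j, t⟩ = X ^ t`, `w ⟨j, t⟩ = z j` and `k0 = 0` this is the confluent Vandermonde
matrix. -/
noncomputable def expPolyMatrix {κ R : Type*} [CommRing R] (Q : κ → R[X]) (w : κ → R)
    (k0 N : ℕ) : Matrix (Fin N) κ R :=
  Matrix.of fun l σ => (Q σ).eval ((k0 + l : ℕ) : R) * w σ ^ (k0 + (l : ℕ))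

theorem linearIndependent_col_expPolyMatrix {ι R : Type*} [Fintype ι] [DecidableEq ι]
    [CommRing R] [IsDomain R] [CharZero R] {z : ι → R} (hz : Function.Injective z)
    (hz0 : ∀ j, z j ≠ 0) {m : ι → ℕ} {Q : (Σ j, Fin (m j)) → R[X]}
    (hQ : ∀ σ, Q σ ∈ degreeLT R (m σ.1)) (hQind : ∀ j, LinearIndependent R fun t => Q ⟨j, t⟩)
    (k0 : ℕ) {N : ℕ} (hN : ∑ j, m j ≤ N) :
    LinearIndependent R (expPolyMatrix Q (fun σ => z σ.1) k0 N).col := by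
  rw [Fintype.linearIndependent_iff]
  intro g hg
  set P : ι → R[X] := fun j => ∑ t, g ⟨j, t⟩ • Q ⟨j, t⟩
  have hP : ∀ j, P j ∈ degreeLT R (m j) := fun j =>
    Submodule.sum_mem _ fun t _ => Submodule.smul_mem _ _ (hQ ⟨j, t⟩)
  have hvan : ∀ k < ∑ j, m j, expPolySum P z (k0 + k) = 0 := by
    intro k hk
    have hk := congrFun hg ⟨k, by omega⟩
    simp only [Finset.sum_apply, Pi.smul_apply, Matrix.col_apply, expPolyMatrix, Matrix.of_apply,
      smul_eq_mul, Pi.zero_apply, Fintype.sum_sigma] at hk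
    rw [← hk, expPolySum]
    simp only [P, eval_finsetSum, eval_smul, smul_eq_mul, sum_mul, mul_assoc]
  rintro ⟨j, t⟩
  exact Fintype.linearIndependent_iff.1 (hQind j) _
    (congrFun (eq_zero_of_expPolySum_eq_zero hz hz0 hP k0 hvan) j) t

theorem hankel_expPolySum_eq_mul {ι : Type*} [Fintype ι] {z : ι → ℂ} {m : ι → ℕ}
    {P : ι → ℂ[X]} (hP : ∀ j, P j ∈ degreeLT ℂ (m j)) (k0 N N' : ℕ) :
    hankel (expPolySum P z) k0 N N' =
      expPolyMatrix (fun σ : Σ j, Fin (m j) => monomial σ.2 (1 : ℂ)) (fun σ => z σ.1) 0 N *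
        (expPolyMatrix (fun σ : Σ j, Fin (m j) => hasseDeriv σ.2 (P σ.1)) (fun σ => z σ.1)
          k0 N')ᵀ := by
  ext i l
  simp only [hankel, expPolySum, expPolyMatrix, Matrix.mul_apply, Matrix.of_apply,
    Matrix.transpose_apply, Fintype.sum_sigma]
  refine sum_congr rfl fun j _ => ?_
  rw [show ((k0 + i + l : ℕ) : ℂ) = i + ((k0 + l : ℕ) : ℂ) by push_cast; ring,
    eval_add_eq_sum_hasseDeriv (hP j), sum_mul]
  refine sum_congr rfl fun t _ => ?_
  rw [show k0 + (i : ℕ) + l = i + (k0 + l) by ring, pow_add]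
  simp only [eval_monomial, zero_add, one_mul]
  ring

theorem rank_hankel_expPolySum {ι : Type*} [Fintype ι] [DecidableEq ι] {z : ι → ℂ}
    (hz : Function.Injective z) (hz0 : ∀ j, z j ≠ 0) {P : ι → ℂ[X]} (hP : ∀ j, P j ≠ 0)
    (k0 : ℕ) {N : ℕ} (hN : ∑ j, ((P j).natDegree + 1) ≤ N) :
    (hankel (expPolySum P z) k0 N N).rank = ∑ j, ((P j).natDegree + 1) := by
  set m : ι → ℕ := fun j => (P j).natDegree + 1
  have hPm : ∀ j, P j ∈ degreeLT ℂ (m j) := fun j =>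
    mem_degreeLT.2 (degree_le_natDegree.trans_lt (by exact_mod_cast Nat.lt_succ_self _))
  have hmonomial : ∀ j, LinearIndependent ℂ fun t : Fin (m j) => monomial (t : ℕ) (1 : ℂ) :=
    fun j => (basisMonomials ℂ).linearIndependent.comp _ Fin.val_injective
  have hhasse : ∀ j, LinearIndependent ℂ fun t : Fin (m j) => hasseDeriv t (P j) :=
    fun j => linearIndependent_hasseDeriv (hP j)
  rw [hankel_expPolySum_eq_mul hPm, Matrix.rank_mul_eq_card_of_linearIndependent,
    Fintype.card_sigma]
  · simp [m]
  · exact linearIndependent_col_expPolyMatrix hz hz0 (fun σ => monomial_coe_mem_degreeLT σ.2 1)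
      hmonomial 0 hN
  · rw [Matrix.row_transpose]
    exact linearIndependent_col_expPolyMatrix hz hz0
      (fun σ => hasseDeriv_mem_degreeLT (hPm σ.1) σ.2) hhasse k0 hN

theorem hmes_eq_expPolySum {n : ℕ} (z : Fin n → ℂ) (m : Fin n → ℕ)
    (c : (j : Fin n) → Fin (m j) → ℂ) :
    hmes z m c = expPolySum (fun j => ((degreeLTEquiv ℂ (m j)).symm (c j) : ℂ[X])) z := by
  funext k
  simp only [hmes, expPolySum, eval_eq_sum_degreeLTEquiv (Subtype.property _), Subtype.coe_eta,
    LinearEquiv.apply_symm_apply, sum_mul]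

theorem hankel_square_rank_general (n : ℕ) (z : Fin n → ℂ)
    (hz : Function.Injective z) (hz0 : ∀ j, z j ≠ 0)
    (m : Fin n → ℕ) (hm : ∀ j, 1 ≤ m j) (M : ℕ) (hM : M = ∑ j, m j)
    (c : (j : Fin n) → Fin (m j) → ℂ)
    (hc : ∀ j, c j ⟨m j - 1, Nat.sub_lt (hm j) one_pos⟩ ≠ 0)
    (k0 N : ℕ) (hN : M ≤ N) :
    (hankel (hmes z m c) k0 N N).rank = M := by
  set P : Fin n → ℂ[X] := fun j => (degreeLTEquiv ℂ (m j)).symm (c j)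
  have hP : ∀ j, P j ≠ 0 := fun j => degreeLTEquiv_symm_ne_zero (hc j)
  have hdeg : ∀ j, (P j).natDegree + 1 = m j := fun j => by
    rw [natDegree_degreeLTEquiv_symm (Nat.sub_add_cancel (hm j)) (hc j)]
    exact Nat.sub_add_cancel (hm j)
  have hsum : ∑ j, ((P j).natDegree + 1) = M := hM ▸ sum_congr rfl fun j _ => hdeg j
  rw [hmes_eq_expPolySum, ← hsum]
  exact rank_hankel_expPolySum hz hz0 hP k0 (hsum ▸ hN)

/-- if all leading coefficients `c j (m j - 1)` are nonzero, then
for every `k0` and every `N ≥ M` the square `N × N` Hankel matrix has rank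
exactly `M`. -/
theorem hankel_square_rank (n : ℕ) (hn : 1 ≤ n) (z : Fin n → ℂ)
    (hz : Function.Injective z) (hz0 : ∀ j, z j ≠ 0)
    (m : Fin n → ℕ) (hm : ∀ j, 1 ≤ m j) (M : ℕ) (hM : M = ∑ j, m j)
    (c : (j : Fin n) → Fin (m j) → ℂ)
    (hc : ∀ j, c j ⟨m j - 1, Nat.sub_lt (hm j) one_pos⟩ ≠ 0)
    (k0 N : ℕ) (hN : M ≤ N) :
    (hankel (hmes z m c) k0 N N).rank = M :=
  hankel_square_rank_general n z hz hz0 m hm M hM c hc k0 N hN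
end

section
/- For every k_0 ∈ ℕ and every N ≥ M, the shifted truncated Hankel matrix satisfies the companion-matrix relation H_{N,M}^{k_0+1} = H_{N,M}^{k_0} · C_M(P), where C_M(P) is the companion matrix of the Prony polynomial P. -/
open Polynomial Finset

/-- The `M × M` companion matrix of a polynomial `P`: subdiagonal entries equal
`1`, the last column is `(-P.coeff 0, …, -P.coeff (M-1))ᵀ`, all other entries
vanish. -/
noncomputable def companionMatrix (M : ℕ) (P : Polynomial ℂ) :
    Matrix (Fin M) (Fin M) ℂ :=
  Matrix.of fun i l =>
    if (l : ℕ) = M - 1 then -P.coeff (i : ℕ)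
    else if (i : ℕ) = (l : ℕ) + 1 then 1 else 0

/-!
Away from the last column, `H^{k₀} C_M(P)` just shifts the columns of `H^{k₀}`; its last column
is `-∑_{t<M} p_t h(k₀ + i + t)`. So the identity says exactly that `h` satisfies the linear
recurrence `∑_t p_t h(K + t) = 0` with characteristic polynomial `P`. By linearity it suffices
to check this for `h(k) = k^s a^k` with `(X - a)^r ∣ P` and `s < r`. With the Euler operator
`θ = X d/dX`, the sum `∑_t p_t (K+t)^s a^(K+t)` is the value at `a` of `θ^s (X^K P)`, and `θ`
lowers the multiplicity of the root `a` by at most one, so `a` is still a root.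
-/

namespace Polynomial

section EulerOperator

variable {R : Type*} [CommSemiring R]

noncomputable def eulerOperator (p : R[X]) : R[X] := X * derivative p

theorem coeff_eulerOperator (p : R[X]) (e : ℕ) :
    (eulerOperator p).coeff e = e * p.coeff e := by
  cases e with
  | zero => simp [eulerOperator]
  | succ e =>
    rw [eulerOperator, coeff_X_mul, coeff_derivative]
    push_cast
    ring

theorem coeff_iterate_eulerOperator (p : R[X]) (s e : ℕ) :
    (eulerOperator^[s] p).coeff e = (e : R) ^ s * p.coeff e := by
  induction s with
  | zero => simp
  | succ s ih =>
    rw [Function.iterate_succ_apply', coeff_eulerOperator, ih, pow_succ]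
    ring

theorem natDegree_iterate_eulerOperator_le (p : R[X]) (s : ℕ) :
    (eulerOperator^[s] p).natDegree ≤ p.natDegree :=
  natDegree_le_iff_coeff_eq_zero.mpr fun e he => by
    rw [coeff_iterate_eulerOperator, coeff_eq_zero_of_natDegree_lt he, mul_zero]

theorem eval_iterate_eulerOperator {p : R[X]} {n : ℕ} (hn : p.natDegree < n) (s : ℕ) (a : R) :
    (eulerOperator^[s] p).eval a = ∑ e ∈ range n, p.coeff e * (e : R) ^ s * a ^ e := by
  rw [eval_eq_sum_range' ((natDegree_iterate_eulerOperator_le p s).trans_lt hn)]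
  simp only [coeff_iterate_eulerOperator, mul_comm ((_ : R) ^ s)]

theorem pow_sub_dvd_iterate_eulerOperator_of_pow_dvd {p q : R[X]} {n : ℕ} (m : ℕ)
    (dvd : q ^ n ∣ p) : q ^ (n - m) ∣ eulerOperator^[m] p := by
  induction m with
  | zero => simpa
  | succ m ih =>
    rw [Nat.sub_succ, Function.iterate_succ_apply']
    exact (pow_sub_one_dvd_derivative_of_pow_dvd ih).mul_left X

end EulerOperator

section Recurrence

variable {R : Type*} [CommRing R]

theorem sum_coeff_mul_pow_mul_pow_eq_zero {p : R[X]} {a : R} {r s n : ℕ}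
    (hdvd : (X - C a) ^ r ∣ p) (hs : s < r) (hn : p.natDegree < n) :
    ∑ e ∈ range n, p.coeff e * (e : R) ^ s * a ^ e = 0 := by
  rw [← eval_iterate_eulerOperator hn]
  have hroot : X - C a ∣ eulerOperator^[s] p :=
    (dvd_pow_self _ (Nat.sub_ne_zero_of_lt hs)).trans
      (pow_sub_dvd_iterate_eulerOperator_of_pow_dvd s hdvd)
  exact dvd_iff_isRoot.mp hroot

variable (R) in
/-- The kernel of `p(S)` on sequences, where `S` is the shift `h ↦ h (· + 1)`. -/
def recurrenceSolSpace (p : R[X]) : Submodule R (ℕ → R) where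
  carrier := {h | ∀ K, ∑ t ∈ range (p.natDegree + 1), p.coeff t * h (K + t) = 0}
  add_mem' hu hv K := by simp [mul_add, sum_add_distrib, hu K, hv K]
  zero_mem' K := by simp
  smul_mem' c h hh K := by simp [mul_left_comm _ c, ← mul_sum, hh K]

theorem mem_recurrenceSolSpace {p : R[X]} {h : ℕ → R} :
    h ∈ recurrenceSolSpace R p ↔ ∀ K, ∑ t ∈ range (p.natDegree + 1), p.coeff t * h (K + t) = 0 :=
  Iff.rfl

theorem pow_mul_pow_mem_recurrenceSolSpace {p : R[X]} {a : R} {r s : ℕ}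
    (hdvd : (X - C a) ^ r ∣ p) (hs : s < r) :
    (fun k : ℕ => (k : R) ^ s * a ^ k) ∈ recurrenceSolSpace R p := by
  rw [mem_recurrenceSolSpace]
  intro K
  -- The shift by `K` is absorbed into the polynomial as the factor `X ^ K`.
  have hdeg : (X ^ K * p).natDegree < K + (p.natDegree + 1) :=
    (natDegree_mul_le.trans (Nat.add_le_add_right (natDegree_X_pow_le K) _)).trans_lt
      (Nat.lt_succ_self _)
  have h := sum_coeff_mul_pow_mul_pow_eq_zero (hdvd.mul_left (X ^ K)) hs hdeg
  rw [sum_range_add, sum_eq_zero fun e he => by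
    rw [coeff_X_pow_mul', if_neg (by simpa using he), zero_mul, zero_mul], zero_add] at h
  simpa [coeff_X_pow_mul', mul_assoc] using h

theorem Monic.apply_add_natDegree_of_mem_recurrenceSolSpace {p : R[X]} (hp : p.Monic)
    {h : ℕ → R} (hh : h ∈ recurrenceSolSpace R p) (K : ℕ) :
    h (K + p.natDegree) = -∑ t ∈ range p.natDegree, p.coeff t * h (K + t) := by
  have hK := mem_recurrenceSolSpace.mp hh K
  rw [sum_range_succ, hp.coeff_natDegree, one_mul] at hK
  exact eq_neg_of_add_eq_zero_right hK

end Recurrence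

end Polynomial

theorem hmes_mem_recurrenceSolSpace {n : ℕ} {z : Fin n → ℂ} {m : Fin n → ℕ}
    (c : (j : Fin n) → Fin (m j) → ℂ) {p : ℂ[X]} (hdvd : ∀ j, (X - C (z j)) ^ m j ∣ p) :
    hmes z m c ∈ recurrenceSolSpace ℂ p := by
  have hsum : hmes z m c =
      ∑ j, ∑ s : Fin (m j), c j s • fun k : ℕ => (k : ℂ) ^ (s : ℕ) * z j ^ k := by
    ext k
    simp [hmes, mul_assoc]
  rw [hsum]
  exact Submodule.sum_mem _ fun j _ => Submodule.sum_mem _ fun s _ =>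
    Submodule.smul_mem _ _ (pow_mul_pow_mem_recurrenceSolSpace (hdvd j) s.isLt)

theorem hankel_mul_companionMatrix_apply (h : ℕ → ℂ) (P : ℂ[X]) (k0 N M : ℕ) (i : Fin N)
    (l : Fin M) :
    (hankel h k0 N M * companionMatrix M P) i l =
      if (l : ℕ) = M - 1 then -∑ t ∈ range M, P.coeff t * h (k0 + i + t)
      else h (k0 + i + (l + 1)) := by
  rw [Matrix.mul_apply]
  simp only [hankel, companionMatrix, Matrix.of_apply]
  split_ifs with hl
  · rw [← Fin.sum_univ_eq_sum_range (fun t => P.coeff t * h (k0 + i + t)), ← sum_neg_distrib]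
    exact sum_congr rfl fun t _ => by ring
  · rw [sum_eq_single ⟨l + 1, by omega⟩ fun t _ ht => by
      rw [if_neg fun h' => ht (Fin.ext h'), mul_zero]] <;> simp

theorem hankel_succ_eq_hankel_mul_companionMatrix {h : ℕ → ℂ} {P : ℂ[X]} (hP : P.Monic)
    (hh : h ∈ recurrenceSolSpace ℂ P) (k0 N : ℕ) :
    hankel h (k0 + 1) N P.natDegree =
      hankel h k0 N P.natDegree * companionMatrix P.natDegree P := by
  ext i l
  rw [hankel_mul_companionMatrix_apply, hankel, Matrix.of_apply]
  split_ifs with hl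
  · rw [← hP.apply_add_natDegree_of_mem_recurrenceSolSpace hh]
    congr 1
    omega
  · congr 1
    omega

theorem hankel_shift_companion_general (n : ℕ) (z : Fin n → ℂ)
    (m : Fin n → ℕ) (M : ℕ) (hM : M = ∑ j, m j)
    (c : (j : Fin n) → Fin (m j) → ℂ) (k0 N : ℕ) :
    hankel (hmes z m c) (k0 + 1) N M =
      hankel (hmes z m c) k0 N M *
        companionMatrix M (∏ j, (X - C (z j)) ^ m j) := by
  set P := ∏ j, (X - C (z j)) ^ m j
  have hP : P.Monic := monic_prod_of_monic _ _ fun j _ => (monic_X_sub_C (z j)).pow _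
  have hdeg : P.natDegree = M := by
    rw [hM, natDegree_prod_of_monic _ _ fun j _ => (monic_X_sub_C (z j)).pow _]
    simp
  rw [← hdeg]
  exact hankel_succ_eq_hankel_mul_companionMatrix hP
    (hmes_mem_recurrenceSolSpace c fun j => dvd_prod_of_mem _ (mem_univ j)) k0 N

/-- the shifted truncated Hankel matrix satisfies
`H_{N,M}^{k0+1} = H_{N,M}^{k0} * C_M(P)`, where `C_M(P)` is the companion
matrix of the Prony polynomial `P = ∏ j, (X - z j) ^ m j`. -/
theorem hankel_shift_companion (n : ℕ) (hn : 1 ≤ n) (z : Fin n → ℂ)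
    (hz : Function.Injective z) (hz0 : ∀ j, z j ≠ 0)
    (m : Fin n → ℕ) (hm : ∀ j, 1 ≤ m j) (M : ℕ) (hM : M = ∑ j, m j)
    (c : (j : Fin n) → Fin (m j) → ℂ) (k0 N : ℕ) (hN : M ≤ N) :
    hankel (hmes z m c) (k0 + 1) N M =
      hankel (hmes z m c) k0 N M *
        companionMatrix M (∏ j, (X - C (z j)) ^ m j) :=
  hankel_shift_companion_general n z m M hM c k0 N
end

section
/- For every k_0 ∈ ℕ, every N ≥ M, and every z ∈ ℂ, one has the determinant identity det((H_{N,M}^{k_0})^* (z · H_{N,M}^{k_0} − H_{N,M}^{k_0+1})) = det((H_{N,M}^{k_0})^* H_{N,M}^{k_0}) · P(z), where ^* denotes the conjugate transpose and P is the Prony polynomial. -/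
open Polynomial Finset Matrix

/-!
The sequence `h` satisfies the linear recurrence whose characteristic polynomial is the Prony
polynomial `P`: the term `k ^ s * z_j ^ k` is annihilated by `P` because `(X - z_j) ^ (s + 1)`
divides `P`, so `X = z_j` is a root of `θ^s (X ^ k * P)` for the Euler operator `θ = X d/dX`.
Consequently, shifting the Hankel matrix is right multiplication by the companion matrix `A` of
`P`, i.e. `H^{k₀+1} = H^{k₀} A`, and `H* (w H - H^{k₀+1}) = H* H (w - A)`, whose determinant is
`det (H* H) * P(w)`.
-/

namespace Polynomial

section CommSemiring

variable {R : Type*} [CommSemiring R]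

noncomputable def eulerOp : R[X] →ₗ[R] R[X] := LinearMap.mulLeft R X ∘ₗ derivative

theorem eulerOp_apply (p : R[X]) : eulerOp p = X * derivative p := rfl

theorem eulerOp_monomial (n : ℕ) (a : R) : eulerOp (monomial n a) = monomial n (a * n) := by
  rcases n with _ | n
  · simp [eulerOp_apply]
  · rw [eulerOp_apply, derivative_monomial, X_mul_monomial]
    simp

theorem iterate_eulerOp_monomial (s n : ℕ) (a : R) :
    (⇑eulerOp)^[s] (monomial n a) = monomial n (a * (n : R) ^ s) := by
  induction s with
  | zero => simp
  | succ s ih => rw [Function.iterate_succ_apply', ih, eulerOp_monomial, pow_succ, mul_assoc]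

theorem pow_sub_dvd_iterate_eulerOp_of_pow_dvd {p q : R[X]} {n : ℕ} (s : ℕ) (hp : q ^ n ∣ p) :
    q ^ (n - s) ∣ (⇑eulerOp)^[s] p := by
  induction s with
  | zero => simpa
  | succ s ih =>
    rw [Nat.sub_succ, Function.iterate_succ_apply', eulerOp_apply]
    exact (pow_sub_one_dvd_derivative_of_pow_dvd ih).mul_left X

/-- This is `(p(S) h) k` for the shift `S h = h (· + 1)`, so `∀ k, shiftPairing h k P = 0`
says that `h` satisfies the linear recurrence with characteristic polynomial `P`. -/
noncomputable def shiftPairing (h : ℕ → R) (k : ℕ) : R[X] →ₗ[R] R :=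
  lsum fun l => LinearMap.mulRight R (h (k + l))

theorem shiftPairing_apply (h : ℕ → R) (k : ℕ) (p : R[X]) :
    shiftPairing h k p = ∑ l ∈ p.support, p.coeff l * h (k + l) := by
  simp [shiftPairing, sum_def]

theorem shiftPairing_monomial (h : ℕ → R) (k l : ℕ) (a : R) :
    shiftPairing h k (monomial l a) = a * h (k + l) := by
  simp [shiftPairing]

theorem shiftPairing_C_mul_X_pow (h : ℕ → R) (k l : ℕ) (a : R) :
    shiftPairing h k (C a * X ^ l) = a * h (k + l) := by
  rw [C_mul_X_pow_eq_monomial, shiftPairing_monomial]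

theorem shiftPairing_X_pow (h : ℕ → R) (k l : ℕ) : shiftPairing h k (X ^ l) = h (k + l) := by
  rw [← monomial_one_right_eq_X_pow, shiftPairing_monomial, one_mul]

theorem shiftPairing_X_mul (h : ℕ → R) (k : ℕ) (p : R[X]) :
    shiftPairing h k (X * p) = shiftPairing h (k + 1) p := by
  induction p using Polynomial.induction_on' with
  | add p q hp hq => rw [mul_add, map_add, map_add, hp, hq]
  | monomial l a =>
    rw [X_mul_monomial, shiftPairing_monomial, shiftPairing_monomial, add_assoc, add_comm 1 l]

theorem shiftPairing_X_pow_mul (h : ℕ → R) (k l : ℕ) (p : R[X]) :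
    shiftPairing h k (X ^ l * p) = shiftPairing h (k + l) p := by
  induction l generalizing k with
  | zero => rw [pow_zero, one_mul, add_zero]
  | succ l ih => rw [pow_succ', mul_assoc, shiftPairing_X_mul, ih, add_right_comm, add_assoc]

theorem shiftPairing_mul_eq_zero {h : ℕ → R} {P : R[X]} (hP : ∀ k, shiftPairing h k P = 0)
    (q : R[X]) (k : ℕ) : shiftPairing h k (q * P) = 0 := by
  induction q using Polynomial.induction_on' with
  | add p q hp hq => rw [add_mul, map_add, hp, hq, add_zero]
  | monomial l a =>
    rw [← C_mul_X_pow_eq_monomial, mul_assoc, ← smul_eq_C_mul, map_smul, shiftPairing_X_pow_mul,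
      hP, smul_zero]

theorem shiftPairing_pow_mul_pow (s : ℕ) (r : R) (k : ℕ) (p : R[X]) :
    shiftPairing (fun n => (n : R) ^ s * r ^ n) k p = ((⇑eulerOp)^[s] (X ^ k * p)).eval r := by
  induction p using Polynomial.induction_on' with
  | add p q hp hq => rw [map_add, hp, hq, mul_add, iterate_map_add, eval_add]
  | monomial l a =>
    rw [shiftPairing_monomial, X_pow_mul_monomial, iterate_eulerOp_monomial, eval_monomial]
    push_cast
    ring

end CommSemiring

section CommRing

variable {R : Type*} [CommRing R]

theorem shiftPairing_pow_mul_pow_eq_zero {s : ℕ} {r : R} {P : R[X]}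
    (hP : (X - C r) ^ (s + 1) ∣ P) (k : ℕ) :
    shiftPairing (fun n => (n : R) ^ s * r ^ n) k P = 0 := by
  rw [shiftPairing_pow_mul_pow, ← IsRoot, ← dvd_iff_isRoot]
  simpa using pow_sub_dvd_iterate_eulerOp_of_pow_dvd s (hP.mul_left (X ^ k))

theorem monic_prod_X_sub_C_pow {ι : Type*} (s : Finset ι) (b : ι → R) (m : ι → ℕ) :
    (∏ i ∈ s, (X - C (b i)) ^ m i).Monic :=
  monic_prod_of_monic _ _ fun i _ => (monic_X_sub_C (b i)).pow _

theorem natDegree_prod_X_sub_C_pow [Nontrivial R] {ι : Type*} (s : Finset ι) (b : ι → R)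
    (m : ι → ℕ) : (∏ i ∈ s, (X - C (b i)) ^ m i).natDegree = ∑ i ∈ s, m i := by
  rw [natDegree_prod_of_monic _ _ fun i _ => (monic_X_sub_C (b i)).pow _]
  exact sum_congr rfl fun i _ => by rw [(monic_X_sub_C _).natDegree_pow, natDegree_X_sub_C, mul_one]

end CommRing

end Polynomial

theorem shiftPairing_hmes_eq_zero {n : ℕ} (z : Fin n → ℂ) (m : Fin n → ℕ)
    (c : (j : Fin n) → Fin (m j) → ℂ) {P : ℂ[X]} (hP : ∀ j, (X - C (z j)) ^ m j ∣ P) (k : ℕ) :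
    shiftPairing (hmes z m c) k P = 0 := by
  have hterm : ∀ j (s : Fin (m j)), shiftPairing (fun n => (n : ℂ) ^ (s : ℕ) * z j ^ n) k P = 0 :=
    fun j s => shiftPairing_pow_mul_pow_eq_zero ((pow_dvd_pow _ s.isLt).trans (hP j)) k
  calc shiftPairing (hmes z m c) k P
      = ∑ j, ∑ s : Fin (m j), c j s * shiftPairing (fun n => (n : ℂ) ^ (s : ℕ) * z j ^ n) k P := by
        simp only [shiftPairing_apply, hmes, mul_sum]
        rw [sum_comm]
        refine sum_congr rfl fun j _ => ?_
        rw [sum_comm]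
        refine sum_congr rfl fun s _ => sum_congr rfl fun l _ => ?_
        push_cast
        ring
    _ = 0 := by simp [hterm]

section Companion

variable {K : Type*} [Field K]

/-- The companion matrix of `P`, presented as multiplication by `X` on `K[X] ⧸ (P)` in the basis
`1, X, …, X ^ (deg P - 1)` so that `charpoly_leftMulMatrix` computes its characteristic
polynomial. -/
noncomputable def companion {P : K[X]} (hP : P ≠ 0) :
    Matrix (Fin P.natDegree) (Fin P.natDegree) K :=
  Algebra.leftMulMatrix (AdjoinRoot.powerBasis hP).basis (AdjoinRoot.root P)

theorem det_smul_one_sub_companion {P : K[X]} (hP : P.Monic) (w : K) :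
    (w • (1 : Matrix _ _ K) - companion hP.ne_zero).det = P.eval w := by
  have hcharpoly := charpoly_leftMulMatrix (AdjoinRoot.powerBasis hP.ne_zero)
  rw [AdjoinRoot.minpoly_powerBasis_gen_of_monic hP] at hcharpoly
  rw [smul_one_eq_diagonal, ← scalar_apply, ← eval_charpoly]
  exact congrArg (eval w) hcharpoly

theorem companion_apply {P : K[X]} (hP : P ≠ 0) (t l : Fin P.natDegree) :
    companion hP t l =
      (AdjoinRoot.powerBasis hP).basis.repr (AdjoinRoot.root P ^ ((l : ℕ) + 1)) t := by
  have hb : (AdjoinRoot.powerBasis hP).basis l = AdjoinRoot.root P ^ (l : ℕ) := by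
    rw [PowerBasis.coe_basis]
    rfl
  rw [pow_succ', ← hb]
  exact Algebra.leftMulMatrix_eq_repr_mul _ (AdjoinRoot.root P) t l

theorem sum_companion_smul_root_pow {P : K[X]} (hP : P ≠ 0) (l : Fin P.natDegree) :
    ∑ t, companion hP t l • AdjoinRoot.root P ^ (t : ℕ) = AdjoinRoot.root P ^ ((l : ℕ) + 1) :=
  calc ∑ t, companion hP t l • AdjoinRoot.root P ^ (t : ℕ)
      = ∑ t, (AdjoinRoot.powerBasis hP).basis.repr (AdjoinRoot.root P ^ ((l : ℕ) + 1)) t •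
          (AdjoinRoot.powerBasis hP).basis t := by
        simp only [companion_apply, PowerBasis.coe_basis, AdjoinRoot.powerBasis_gen]
        rfl
    _ = _ := (AdjoinRoot.powerBasis hP).basis.sum_repr _

end Companion

theorem hankel_succ_eq_mul_companion {h : ℕ → ℂ} {P : ℂ[X]} (hP : P ≠ 0)
    (hh : ∀ k, shiftPairing h k P = 0) (k0 N : ℕ) :
    hankel h (k0 + 1) N P.natDegree = hankel h k0 N P.natDegree * companion hP := by
  ext i l
  -- `X ^ (l + 1) ≡ ∑ t, companion hP t l * X ^ t (mod P)`, and the pairing kills multiples of `P`.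
  obtain ⟨q, hq⟩ : P ∣ X ^ ((l : ℕ) + 1) - ∑ t, C (companion hP t l) * X ^ (t : ℕ) := by
    rw [← AdjoinRoot.mk_eq_zero, map_sub, map_sum, sub_eq_zero]
    simp only [map_mul, map_pow, AdjoinRoot.mk_X, AdjoinRoot.mk_C]
    rw [← sum_companion_smul_root_pow hP]
    simp [Algebra.smul_def]
  have hrec := shiftPairing_mul_eq_zero hh q (k0 + i)
  rw [mul_comm, ← hq, map_sub, map_sum, sub_eq_zero] at hrec
  simp only [shiftPairing_X_pow, shiftPairing_C_mul_X_pow] at hrec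
  rw [Matrix.mul_apply]
  simp only [hankel, Matrix.of_apply]
  rw [show k0 + 1 + (i : ℕ) + l = k0 + i + (l + 1) by omega, hrec]
  exact sum_congr rfl fun t _ => mul_comm _ _

theorem hankel_pencil_det_general (n : ℕ) (z : Fin n → ℂ)
    (m : Fin n → ℕ) (M : ℕ) (hM : M = ∑ j, m j)
    (c : (j : Fin n) → Fin (m j) → ℂ) (k0 N : ℕ) :
    ∀ w : ℂ,
      ((hankel (hmes z m c) k0 N M)ᴴ *
          (w • hankel (hmes z m c) k0 N M -
            hankel (hmes z m c) (k0 + 1) N M)).det =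
        ((hankel (hmes z m c) k0 N M)ᴴ * hankel (hmes z m c) k0 N M).det *
          (∏ j, (X - C (z j)) ^ m j).eval w := by
  intro w
  have hP := monic_prod_X_sub_C_pow univ z m
  obtain rfl : M = (∏ j, (X - C (z j)) ^ m j).natDegree :=
    hM.trans (natDegree_prod_X_sub_C_pow univ z m).symm
  set H := hankel (hmes z m c) k0 N _
  set A := companion hP.ne_zero
  have hshift : hankel (hmes z m c) (k0 + 1) N _ = H * A :=
    hankel_succ_eq_mul_companion hP.ne_zero
      (shiftPairing_hmes_eq_zero z m c fun j => dvd_prod_of_mem _ (mem_univ j)) k0 N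
  have hpencil : w • H - H * A = H * (w • 1 - A) := by
    rw [Matrix.mul_sub, Matrix.mul_smul, Matrix.mul_one]
  rw [hshift, hpencil, ← Matrix.mul_assoc, det_mul, det_smul_one_sub_companion hP]

/-- the determinant identity
`det((H_{N,M}^{k0})ᴴ * (w • H_{N,M}^{k0} - H_{N,M}^{k0+1}))
  = det((H_{N,M}^{k0})ᴴ * H_{N,M}^{k0}) * P(w)`
where `P = ∏ j, (X - z j) ^ m j` is the Prony polynomial. -/
theorem hankel_pencil_det (n : ℕ) (hn : 1 ≤ n) (z : Fin n → ℂ)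
    (hz : Function.Injective z) (hz0 : ∀ j, z j ≠ 0)
    (m : Fin n → ℕ) (hm : ∀ j, 1 ≤ m j) (M : ℕ) (hM : M = ∑ j, m j)
    (c : (j : Fin n) → Fin (m j) → ℂ) (k0 N : ℕ) (hN : M ≤ N) :
    ∀ w : ℂ,
      ((hankel (hmes z m c) k0 N M)ᴴ *
          (w • hankel (hmes z m c) k0 N M -
            hankel (hmes z m c) (k0 + 1) N M)).det =
        ((hankel (hmes z m c) k0 N M)ᴴ * hankel (hmes z m c) k0 N M).det *
          (∏ j, (X - C (z j)) ^ m j).eval w :=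
  hankel_pencil_det_general n z m M hM c k0 N
end

section
/- Let A and B be N × M complex matrices with N ≥ M, and suppose A = U · [Σ'; 0] · X and B = V · [Σ; 0] · X, where U and V are N × N unitary matrices, X is an invertible M × M matrix, Σ and Σ' are M × M diagonal matrices, [Σ; 0] denotes the N × M matrix obtained by stacking the M × M block on top of the (N − M) × M zero block, and Σ is invertible. Then for every z ∈ ℂ: B^* (A − z B) = X^* Σ^* (V_M^* U_M Σ' − z Σ) X, where U_M and V_M denote the N × M matrices formed by the first M columns of U and V; consequently det(B^* (A − z B)) = 0 if and only if z is an eigenvalue of the M × M matrix Σ^{−1} V_M^* U_M Σ'. -/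
/-!
Multiplying by `[Σ; 0]` only sees the first `M` columns, so `A = U_M Σ' X` and `B = V_M Σ X`;
the columns of `V_M` are orthonormal, whence `B^* (A - z B) = X^* Σ^* (V_M^* U_M Σ' - z Σ) X`.
As `X` and `Σ` are invertible, this pencil is singular exactly when
`Σ⁻¹ V_M^* U_M Σ' - z = Σ⁻¹ (V_M^* U_M Σ' - z Σ)` is.
-/

open Matrix

/-- The `N × M` matrix obtained by stacking an `M × M` block `D` on top of an
`(N - M) × M` zero block. -/
def stackZero {M : ℕ} (N : ℕ) (D : Matrix (Fin M) (Fin M) ℂ) :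
    Matrix (Fin N) (Fin M) ℂ :=
  Matrix.of fun i l => if hi : (i : ℕ) < M then D ⟨(i : ℕ), hi⟩ l else 0

/-- The `N × M` matrix formed by the first `M` columns of an `N × N` matrix. -/
def firstCols {N : ℕ} (M : ℕ) (hNM : M ≤ N) (W : Matrix (Fin N) (Fin N) ℂ) :
    Matrix (Fin N) (Fin M) ℂ :=
  W.submatrix id (Fin.castLE hNM)

theorem stackZero_eq_firstCols_one_mul {N M : ℕ} (hNM : M ≤ N) (D : Matrix (Fin M) (Fin M) ℂ) :
    stackZero N D = firstCols M hNM 1 * D := by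
  ext i l
  simp only [stackZero, firstCols, of_apply, mul_apply, submatrix_apply, id, one_apply]
  split_ifs with hi
  · rw [Finset.sum_eq_single ⟨i, hi⟩ (fun k _ hk => by simp [Fin.ext_iff] at *; omega)
      (by simp)]
    simp
  · exact (Finset.sum_eq_zero fun k _ => by simp [Fin.ext_iff]; omega).symm

theorem mul_stackZero {N M : ℕ} (hNM : M ≤ N) (W : Matrix (Fin N) (Fin N) ℂ)
    (D : Matrix (Fin M) (Fin M) ℂ) :
    W * stackZero N D = firstCols M hNM W * D := by
  rw [stackZero_eq_firstCols_one_mul hNM, ← Matrix.mul_assoc]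
  exact congrArg (· * D) (mul_submatrix_one (Equiv.refl _) _ W)

theorem Matrix.conjTranspose_mul_self_submatrix {m n R : Type*} [Fintype m] [Fintype n]
    [DecidableEq m] [DecidableEq n] [NonAssocSemiring R] [StarRing R]
    {W : Matrix m m R} (hW : Wᴴ * W = 1) {e : n → m} (he : Function.Injective e) :
    (W.submatrix id e)ᴴ * W.submatrix id e = 1 := by
  rw [conjTranspose_submatrix, ← submatrix_mul _ _ _ _ _ Function.bijective_id, hW,
    submatrix_one _ he]

theorem Matrix.conjTranspose_mul_sub_smul {l m n R : Type*} [Fintype l] [Fintype m] [Fintype n]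
    [DecidableEq m] [CommRing R] [StarRing R]
    {Q : Matrix l m R} (hQ : Qᴴ * Q = 1) (P : Matrix l m R) (S S' : Matrix m m R)
    (X : Matrix m n R) (z : R) :
    (Q * S * X)ᴴ * (P * S' * X - z • (Q * S * X)) = Xᴴ * Sᴴ * (Qᴴ * P * S' - z • S) * X := by
  have hQS : Qᴴ * (Q * (S * X)) = S * X := by rw [← Matrix.mul_assoc, hQ, Matrix.one_mul]
  simp only [conjTranspose_mul, Matrix.mul_sub, Matrix.sub_mul, Matrix.mul_smul,
    Matrix.smul_mul, Matrix.mul_assoc, hQS]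

theorem Matrix.det_mul_mul_eq_zero_iff {n K : Type*} [Fintype n] [DecidableEq n] [Field K]
    {P Q : Matrix n n K} (hP : IsUnit P) (hQ : IsUnit Q) (C : Matrix n n K) :
    (P * C * Q).det = 0 ↔ C.det = 0 := by
  rw [isUnit_iff_isUnit_det, isUnit_iff_ne_zero] at hP hQ
  simp [det_mul, hP, hQ]

theorem Matrix.inv_mul_sub_smul_one {n K : Type*} [Fintype n] [DecidableEq n] [Field K]
    {S : Matrix n n K} (hS : IsUnit S) (C : Matrix n n K) (z : K) :
    S⁻¹ * C - z • (1 : Matrix n n K) = S⁻¹ * (C - z • S) := by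
  rw [Matrix.mul_sub, Matrix.mul_smul, nonsing_inv_mul S ((isUnit_iff_isUnit_det S).mp hS)]

theorem gsvd_pencil_general (N M : ℕ) (hNM : M ≤ N)
    (A B : Matrix (Fin N) (Fin M) ℂ)
    (U V : Matrix (Fin N) (Fin N) ℂ) (hV : Vᴴ * V = 1)
    (Xm : Matrix (Fin M) (Fin M) ℂ) (hX : IsUnit Xm)
    (S S' : Matrix (Fin M) (Fin M) ℂ)
    (hSu : IsUnit S)
    (hA : A = U * stackZero N S' * Xm) (hB : B = V * stackZero N S * Xm) :
    ∀ z : ℂ,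
      Bᴴ * (A - z • B) =
        Xmᴴ * Sᴴ *
          ((firstCols M hNM V)ᴴ * firstCols M hNM U * S' - z • S) * Xm ∧
      ((Bᴴ * (A - z • B)).det = 0 ↔
        (S⁻¹ * (firstCols M hNM V)ᴴ * firstCols M hNM U * S' -
            z • (1 : Matrix (Fin M) (Fin M) ℂ)).det = 0) := by
  intro z
  have hVM : (firstCols M hNM V)ᴴ * firstCols M hNM V = 1 :=
    conjTranspose_mul_self_submatrix hV (Fin.castLE_injective hNM)
  have hpencil : Bᴴ * (A - z • B) =
      Xmᴴ * Sᴴ * ((firstCols M hNM V)ᴴ * firstCols M hNM U * S' - z • S) * Xm := by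
    rw [hA, hB, mul_stackZero hNM, mul_stackZero hNM]
    exact conjTranspose_mul_sub_smul hVM _ _ _ _ _
  refine ⟨hpencil, ?_⟩
  rw [hpencil, Matrix.mul_assoc S⁻¹, Matrix.mul_assoc S⁻¹, inv_mul_sub_smul_one hSu,
    ← Matrix.mul_one (S⁻¹ * _),
    det_mul_mul_eq_zero_iff
      (((isUnit_conjTranspose _).mpr hX).mul ((isUnit_conjTranspose _).mpr hSu)) hX,
    det_mul_mul_eq_zero_iff (isUnit_nonsing_inv_iff.mpr hSu) isUnit_one]

/-- if `A = U * [Σ'; 0] * X` and `B = V * [Σ; 0] * X` with `U, V`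
unitary, `X` invertible, `Σ, Σ'` diagonal and `Σ` invertible, then
`Bᴴ (A - z B) = Xᴴ Σᴴ (V_Mᴴ U_M Σ' - z Σ) X`; consequently
`det(Bᴴ (A - z B)) = 0` iff `z` is an eigenvalue of `Σ⁻¹ V_Mᴴ U_M Σ'`. -/
theorem gsvd_pencil (N M : ℕ) (hNM : M ≤ N)
    (A B : Matrix (Fin N) (Fin M) ℂ)
    (U V : Matrix (Fin N) (Fin N) ℂ) (hU : Uᴴ * U = 1) (hV : Vᴴ * V = 1)
    (Xm : Matrix (Fin M) (Fin M) ℂ) (hX : IsUnit Xm)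
    (S S' : Matrix (Fin M) (Fin M) ℂ) (hS : S.IsDiag) (hS' : S'.IsDiag)
    (hSu : IsUnit S)
    (hA : A = U * stackZero N S' * Xm) (hB : B = V * stackZero N S * Xm) :
    ∀ z : ℂ,
      Bᴴ * (A - z • B) =
        Xmᴴ * Sᴴ *
          ((firstCols M hNM V)ᴴ * firstCols M hNM U * S' - z • S) * Xm ∧
      ((Bᴴ * (A - z • B)).det = 0 ↔
        (S⁻¹ * (firstCols M hNM V)ᴴ * firstCols M hNM U * S' -
            z • (1 : Matrix (Fin M) (Fin M) ℂ)).det = 0) :=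
  gsvd_pencil_general N M hNM A B U V hV Xm hX S S' hSu hA hB
end
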